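/- arXiv:0907.4098 — 2 statements merged into one kernel-verified Lean document; each statement's English description precedes it below -/
import Mathlib

section
/- Let Q be a Schwartz solution of ΔQ - Q + Q^p = 0 on R^N, L_+ = -Δ + 1 - pQ^{p-1}, and suppose ρ ∈ H^1 solves L_+ ρ = (|y|²/4) Q. Then 2(ρ, Q)_{L^2} = ((1+σ_c)/4) ‖yQ‖_{L^2}², where σ_c = N/2 - 2/(p-1). -/
/-!
Differentiating the family `λ ^ (2 / (p - 1)) Q (λ y)` of solutions of `ΔQ - λ²Q + Q^p = 0` at
`λ = 1` gives `L₊ (ΛQ) = -2Q` for `ΛQ = (2 / (p - 1)) Q + y · ∇Q`; pointwise this is the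
commutator identity `[Δ, y · ∇] = 2Δ` combined with the equation for `Q`. Self-adjointness of `L₊`
then gives `-2 (ρ, Q) = (L₊ ρ, ΛQ) = ¼ (|y|² Q, ΛQ)`, and integrating `y · ∇` by parts against
`|y|² Q` gives `(|y|² Q, y · ∇Q) = -((N + 2) / 2) ‖yQ‖²`.
-/

open MeasureTheory

/-- The Laplacian of a real-valued function on `ℝ^N`. -/
noncomputable def lapR {N : ℕ} (f : EuclideanSpace ℝ (Fin N) → ℝ)
    (x : EuclideanSpace ℝ (Fin N)) : ℝ :=
  ∑ i : Fin N, fderiv ℝ (fun y => fderiv ℝ f y (EuclideanSpace.single i 1)) x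
    (EuclideanSpace.single i 1)

open SchwartzMap LineDeriv Laplacian

noncomputable section

namespace SchwartzMap

section Euler

variable {E F : Type*} [NormedAddCommGroup E] [NormedSpace ℝ E]
  [NormedAddCommGroup F] [NormedSpace ℝ F]

/-- The Euler operator `y · ∇`. -/
def euler : 𝓢(E, F) →L[ℝ] 𝓢(E, F) :=
  bilinLeftCLM (ContinuousLinearMap.id ℝ (E →L[ℝ] F)) Function.HasTemperateGrowth.id'
    ∘L fderivCLM ℝ E F

theorem euler_apply (f : 𝓢(E, F)) (x : E) : euler f x = fderiv ℝ f x x := rfl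

theorem lineDerivOp_euler (f : 𝓢(E, F)) (v : E) :
    ∂_{v} (euler f) = ∂_{v} f + euler (∂_{v} f) := by
  ext x
  have hf₂ : HasFDerivAt (fderiv ℝ f) (fderiv ℝ (fderiv ℝ f) x) x :=
    (fderivCLM ℝ E F f).hasFDerivAt x
  have hsymm : fderiv ℝ (fderiv ℝ f) x v x = fderiv ℝ (fderiv ℝ f) x x v :=
    second_derivative_symmetric (fun y => f.hasFDerivAt y) hf₂ v x
  have hdiag : HasFDerivAt (fun y => fderiv ℝ f y y)
      (fderiv ℝ f x + (fderiv ℝ (fderiv ℝ f) x).flip x) x := by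
    simpa using hf₂.clm_apply (hasFDerivAt_id x)
  have hpartial : HasFDerivAt (fun y => fderiv ℝ f y v) ((fderiv ℝ (fderiv ℝ f) x).flip v) x := by
    simpa using hf₂.clm_apply (hasFDerivAt_const v x)
  show fderiv ℝ (fun y => fderiv ℝ f y y) x v =
    fderiv ℝ f x v + fderiv ℝ (fun y => fderiv ℝ f y v) x x
  simp [hdiag.fderiv, hpartial.fderiv, hsymm]

theorem lineDerivOp_smulLeftCLM (ℓ : E →L[ℝ] ℝ) (f : 𝓢(E, F)) (v : E) :
    ∂_{v} (smulLeftCLM F ℓ f) = ℓ v • f + smulLeftCLM F ℓ (∂_{v} f) := by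
  ext x
  have h : HasFDerivAt (fun y => ℓ y • f y) (ℓ x • fderiv ℝ f x + ℓ.smulRight (f x)) x :=
    ℓ.hasFDerivAt.smul (f.hasFDerivAt x)
  rw [lineDerivOp_apply_eq_fderiv, smulLeftCLM_apply ℓ.hasTemperateGrowth]
  simp [h.fderiv, add_comm, lineDerivOp_apply_eq_fderiv,
    smulLeftCLM_apply_apply ℓ.hasTemperateGrowth]

end Euler

section InnerProductSpace

variable {E F : Type*} [NormedAddCommGroup E] [InnerProductSpace ℝ E]
  [NormedAddCommGroup F] [NormedSpace ℝ F]

theorem euler_eq_sum {ι : Type*} [Fintype ι] (b : OrthonormalBasis ι ℝ E) (f : 𝓢(E, F)) :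
    euler f = ∑ i, smulLeftCLM F (innerSL ℝ (b i)) (∂_{b i} f) := by
  ext x
  rw [euler_apply, sum_apply, ← congrArg (fderiv ℝ f x) (b.sum_repr' x), map_sum]
  refine Finset.sum_congr rfl fun i _ => ?_
  rw [smulLeftCLM_apply_apply (innerSL ℝ (b i)).hasTemperateGrowth, lineDerivOp_apply_eq_fderiv,
    map_smul, innerSL_apply_apply]

theorem sum_lineDerivOp_smulLeftCLM_inner {ι : Type*} [Fintype ι] (b : OrthonormalBasis ι ℝ E)
    (f : 𝓢(E, F)) :
    ∑ i, ∂_{b i} (smulLeftCLM F (innerSL ℝ (b i)) f) = (Fintype.card ι : ℝ) • f + euler f := by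
  simp only [lineDerivOp_smulLeftCLM, Finset.sum_add_distrib, ← euler_eq_sum b,
    innerSL_apply_apply, real_inner_self_eq_norm_sq, b.norm_eq_one, one_pow, one_smul,
    Finset.sum_const, Finset.card_univ, Nat.cast_smul_eq_nsmul]

theorem smulLeftCLM_norm_sq_apply (f : 𝓢(E, ℝ)) (x : E) :
    smulLeftCLM ℝ (fun x => ‖x‖ ^ 2) f x = ‖x‖ ^ 2 * f x :=
  smulLeftCLM_apply_apply (Function.hasTemperateGrowth_norm_sq E) f x

theorem euler_smulLeftCLM_norm_sq_apply (f : 𝓢(E, ℝ)) (x : E) :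
    euler (smulLeftCLM ℝ (fun x => ‖x‖ ^ 2) f) x = 2 * ‖x‖ ^ 2 * f x + ‖x‖ ^ 2 * euler f x := by
  have h : HasFDerivAt (fun y => ‖y‖ ^ 2 * f y)
      (‖x‖ ^ 2 • fderiv ℝ f x + f x • 2 • innerSL ℝ x) x :=
    (hasStrictFDerivAt_norm_sq x).hasFDerivAt.mul (f.hasFDerivAt x)
  rw [euler_apply, smulLeftCLM_apply (Function.hasTemperateGrowth_norm_sq E)]
  simp only [h.fderiv, euler_apply, add_apply, smul_apply, smul_eq_mul, nsmul_eq_mul,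
    Nat.cast_ofNat, innerSL_apply_apply, real_inner_self_eq_norm_sq]
  ring

variable [FiniteDimensional ℝ E]

theorem laplacian_euler (f : 𝓢(E, F)) : Δ (euler f) = (2 : ℝ) • Δ f + euler (Δ f) := by
  simp only [laplacian_eq_sum (stdOrthonormalBasis ℝ E), lineDerivOp_euler, lineDerivOp_add,
    map_sum, Finset.sum_add_distrib, Finset.smul_sum, two_smul]
  abel

variable [MeasurableSpace E] [BorelSpace E] {μ : Measure E} [μ.IsAddHaarMeasure]

theorem integrable_mul (f g : 𝓢(E, ℝ)) : Integrable (fun x => f x * g x) μ :=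
  (pairing (ContinuousLinearMap.mul ℝ ℝ) f g).integrable

theorem integrable_norm_sq_mul_mul (f g : 𝓢(E, ℝ)) :
    Integrable (fun x => ‖x‖ ^ 2 * f x * g x) μ := by
  have h := integrable_mul (smulLeftCLM ℝ (fun x => ‖x‖ ^ 2) f) g (μ := μ)
  simp only [smulLeftCLM_norm_sq_apply] at h
  exact h

theorem integral_mul_euler (g h : 𝓢(E, ℝ)) :
    ∫ x, g x * euler h x ∂μ = -∫ x, (Module.finrank ℝ E * g x + euler g x) * h x ∂μ := by
  set b := stdOrthonormalBasis ℝ E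
  set ℓg := fun i => smulLeftCLM ℝ (innerSL ℝ (b i)) g
  have hsum : ∀ x, g x * euler h x = ∑ i, ℓg i x * ∂_{b i} h x := fun x => by
    rw [euler_eq_sum b, sum_apply, Finset.mul_sum]
    refine Finset.sum_congr rfl fun i _ => ?_
    rw [smulLeftCLM_apply_apply (innerSL ℝ (b i)).hasTemperateGrowth,
      smulLeftCLM_apply_apply (innerSL ℝ (b i)).hasTemperateGrowth, smul_eq_mul, smul_eq_mul]
    ring
  have hdiv : ∀ x, Module.finrank ℝ E * g x + euler g x = ∑ i, ∂_{b i} (ℓg i) x := fun x => by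
    rw [← sum_apply, sum_lineDerivOp_smulLeftCLM_inner b g, Fintype.card_fin]
    simp
  simp_rw [hsum, hdiv, Finset.sum_mul]
  rw [integral_finsetSum _ fun i _ => integrable_mul _ _,
    integral_finsetSum _ fun i _ => integrable_mul _ _, ← Finset.sum_neg_distrib]
  exact Finset.sum_congr rfl fun i _ => integral_mul_lineDerivOp_right_eq_neg_left _ _ _

theorem integral_norm_sq_mul_mul_euler (f : 𝓢(E, ℝ)) :
    ∫ x, ‖x‖ ^ 2 * f x * euler f x ∂μ =
      -((Module.finrank ℝ E + 2) / 2) * ∫ x, ‖x‖ ^ 2 * f x * f x ∂μ := by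
  have h := integral_mul_euler (smulLeftCLM ℝ (fun x => ‖x‖ ^ 2) f) f (μ := μ)
  simp only [euler_smulLeftCLM_norm_sq_apply, smulLeftCLM_norm_sq_apply] at h
  have hsplit : ∫ x, (Module.finrank ℝ E * (‖x‖ ^ 2 * f x) + (2 * ‖x‖ ^ 2 * f x +
      ‖x‖ ^ 2 * euler f x)) * f x ∂μ = (Module.finrank ℝ E + 2) * ∫ x, ‖x‖ ^ 2 * f x * f x ∂μ +
      ∫ x, ‖x‖ ^ 2 * f x * euler f x ∂μ := by
    rw [← integral_const_mul, ← integral_add ((integrable_norm_sq_mul_mul f f).const_mul _)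
      (integrable_norm_sq_mul_mul f (euler f))]
    congr 1 with x
    ring
  rw [hsplit] at h
  linear_combination (1 / 2 : ℝ) * h

end InnerProductSpace

end SchwartzMap

section Scaling

variable {E : Type*} [NormedAddCommGroup E] [NormedSpace ℝ E]

/-- `Λ`, the generator of the scalings `f ↦ λ ^ (2 / (p - 1)) f (λ ·)`. -/
def scalingGen (p : ℝ) : 𝓢(E, ℝ) →L[ℝ] 𝓢(E, ℝ) :=
  (2 / (p - 1)) • ContinuousLinearMap.id ℝ _ + euler

theorem scalingGen_apply (p : ℝ) (f : 𝓢(E, ℝ)) (x : E) :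
    scalingGen p f x = 2 / (p - 1) * f x + euler f x := rfl

end Scaling

section GroundState

variable {E : Type*} [NormedAddCommGroup E] [InnerProductSpace ℝ E] [FiniteDimensional ℝ E]

def schrodingerOp (V : E → ℝ) (f : 𝓢(E, ℝ)) (x : E) : ℝ := -Δ f x + V x * f x

variable {p : ℝ} {Q : 𝓢(E, ℝ)}

theorem euler_laplacian_apply_of_groundState (hQpos : ∀ x, 0 < Q x)
    (hQ : ∀ x, Δ Q x - Q x + Q x ^ p = 0) (x : E) :
    euler (Δ Q) x = (1 - p * Q x ^ (p - 1)) * euler Q x := by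
  have hΔQ : ⇑(Δ Q : 𝓢(E, ℝ)) = fun y => Q y - Q y ^ p :=
    funext fun y => by linear_combination hQ y
  have h : HasFDerivAt (fun y => Q y - Q y ^ p)
      (fderiv ℝ Q x - (p * Q x ^ (p - 1)) • fderiv ℝ Q x) x :=
    (Q.hasFDerivAt x).sub ((Q.hasFDerivAt x).rpow_const (Or.inl (hQpos x).ne'))
  rw [euler_apply, hΔQ, h.fderiv, euler_apply]
  simp only [sub_apply, smul_apply, smul_eq_mul]
  ring

theorem schrodingerOp_scalingGen_of_groundState (hp : p ≠ 1) (hQpos : ∀ x, 0 < Q x)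
    (hQ : ∀ x, Δ Q x - Q x + Q x ^ p = 0) (x : E) :
    schrodingerOp (fun y => 1 - p * Q y ^ (p - 1)) (scalingGen p Q) x = -2 * Q x := by
  have hΔ : Δ (scalingGen p Q) x = (2 / (p - 1) + 2) * Δ Q x + euler (Δ Q) x := by
    rw [← laplacianCLM_eq']
    simp only [scalingGen, add_apply, smul_apply, ContinuousLinearMap.id_apply, map_add, map_smul,
      laplacianCLM_eq', laplacian_euler, smul_eq_mul]
    ring
  have hQp : Q x ^ (p - 1) * Q x = Q x ^ p := by
    rw [← Real.rpow_add_one (hQpos x).ne', sub_add_cancel]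
  have hc : 2 / (p - 1) * (p - 1) = 2 := div_mul_cancel₀ _ (sub_ne_zero.mpr hp)
  rw [schrodingerOp, hΔ, euler_laplacian_apply_of_groundState hQpos hQ, scalingGen_apply]
  linear_combination (-(2 / (p - 1) + 2)) * hQ x - 2 / (p - 1) * p * hQp - Q x ^ p * hc

variable [MeasurableSpace E] [BorelSpace E] {μ : Measure E} [μ.IsAddHaarMeasure]

theorem integral_mul_schrodingerOp_comm (V : E → ℝ) (f g : 𝓢(E, ℝ))
    (hf : Integrable (fun x => f x * schrodingerOp V g x) μ)
    (hg : Integrable (fun x => schrodingerOp V f x * g x) μ) :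
    ∫ x, f x * schrodingerOp V g x ∂μ = ∫ x, schrodingerOp V f x * g x ∂μ := by
  rw [← sub_eq_zero, ← integral_sub hf hg]
  have h : ∀ x, f x * schrodingerOp V g x - schrodingerOp V f x * g x =
      Δ f x * g x - f x * Δ g x := fun x => by
    simp only [schrodingerOp]
    ring
  simp_rw [h]
  rw [integral_sub (integrable_mul _ _) (integrable_mul _ _),
    integral_mul_laplacian_right_eq_left, sub_self]

theorem integral_norm_sq_mul_mul_scalingGen (p : ℝ) (f : 𝓢(E, ℝ)) :
    ∫ x, ‖x‖ ^ 2 * f x * scalingGen p f x ∂μ =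
      (2 / (p - 1) - (Module.finrank ℝ E + 2) / 2) * ∫ x, ‖x‖ ^ 2 * f x * f x ∂μ := by
  have h : ∀ x, ‖x‖ ^ 2 * f x * scalingGen p f x =
      2 / (p - 1) * (‖x‖ ^ 2 * f x * f x) + ‖x‖ ^ 2 * f x * euler f x := fun x => by
    rw [scalingGen_apply]
    ring
  simp_rw [h]
  rw [integral_add ((integrable_norm_sq_mul_mul f f).const_mul _)
    (integrable_norm_sq_mul_mul f _), integral_const_mul, integral_norm_sq_mul_mul_euler]
  ring

theorem two_mul_integral_mul_of_groundState {ρ : 𝓢(E, ℝ)} (hp : p ≠ 1) (hQpos : ∀ x, 0 < Q x)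
    (hQ : ∀ x, Δ Q x - Q x + Q x ^ p = 0)
    (hρ : ∀ x, schrodingerOp (fun y => 1 - p * Q y ^ (p - 1)) ρ x = ‖x‖ ^ 2 / 4 * Q x) :
    2 * ∫ x, ρ x * Q x ∂μ =
      ((Module.finrank ℝ E + 2) / 2 - 2 / (p - 1)) / 4 * ∫ x, ‖x‖ ^ 2 * Q x * Q x ∂μ := by
  have hΛQ := schrodingerOp_scalingGen_of_groundState hp hQpos hQ
  set V := fun y => 1 - p * Q y ^ (p - 1)
  have hint₁ : Integrable (fun x => ρ x * schrodingerOp V (scalingGen p Q) x) μ :=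
    ((integrable_mul ρ Q).const_mul (-2)).congr (ae_of_all _ fun x => by
      simp only [hΛQ]
      ring)
  have hint₂ : Integrable (fun x => schrodingerOp V ρ x * scalingGen p Q x) μ :=
    ((integrable_norm_sq_mul_mul Q (scalingGen p Q)).div_const 4).congr (ae_of_all _ fun x => by
      simp only [hρ]
      ring)
  calc 2 * ∫ x, ρ x * Q x ∂μ = -∫ x, ρ x * schrodingerOp V (scalingGen p Q) x ∂μ := by
        rw [← integral_neg, ← integral_const_mul]
        congr 1 with x
        rw [hΛQ]
        ring
    _ = -∫ x, schrodingerOp V ρ x * scalingGen p Q x ∂μ := by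
        rw [integral_mul_schrodingerOp_comm V ρ _ hint₁ hint₂]
    _ = -(1 / 4) * ∫ x, ‖x‖ ^ 2 * Q x * scalingGen p Q x ∂μ := by
        rw [← integral_const_mul, ← integral_neg]
        congr 1 with x
        rw [hρ]
        ring
    _ = _ := by
        rw [integral_norm_sq_mul_mul_scalingGen]
        ring

end GroundState

theorem lapR_eq_laplacian {N : ℕ} (f : 𝓢(EuclideanSpace ℝ (Fin N), ℝ))
    (x : EuclideanSpace ℝ (Fin N)) : lapR f x = Δ f x := by
  rw [laplacian_eq_sum (EuclideanSpace.basisFun (Fin N) ℝ), sum_apply]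
  simp only [lapR, EuclideanSpace.basisFun_apply, lineDerivOp_apply_eq_fderiv]
  rfl

end

theorem rho_Q_pairing_general (N : ℕ) (p : ℝ) (hp : 1 < p)
    (Q ρ : SchwartzMap (EuclideanSpace ℝ (Fin N)) ℝ)
    (hQpos : ∀ y, 0 < Q y)
    (hQeq : ∀ y, lapR (⇑Q) y - Q y + Q y ^ p = 0)
    (hρeq : ∀ y, -lapR (⇑ρ) y + ρ y - p * Q y ^ (p - 1) * ρ y = (‖y‖ ^ 2 / 4) * Q y) :
    2 * (∫ y : EuclideanSpace ℝ (Fin N), ρ y * Q y) =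
      ((1 + ((N : ℝ) / 2 - 2 / (p - 1))) / 4) *
        ∫ y : EuclideanSpace ℝ (Fin N), ‖y‖ ^ 2 * Q y ^ 2 := by
  have hQ : ∀ y, Δ Q y - Q y + Q y ^ p = 0 := fun y => by
    simpa only [lapR_eq_laplacian] using hQeq y
  have hρ : ∀ y, schrodingerOp (fun y => 1 - p * Q y ^ (p - 1)) ρ y = ‖y‖ ^ 2 / 4 * Q y :=
    fun y => by
      rw [schrodingerOp, ← lapR_eq_laplacian]
      linear_combination hρeq y
  have hS : ∫ y, ‖y‖ ^ 2 * Q y ^ 2 = ∫ y, ‖y‖ ^ 2 * Q y * Q y := by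
    congr 1 with y
    ring
  rw [two_mul_integral_mul_of_groundState hp.ne' hQpos hQ hρ, finrank_euclideanSpace_fin, hS]
  ring

/-- If `Q` is a Schwartz positive solution of `ΔQ - Q + Q^p = 0` and `ρ` is a Schwartz solution
of `L₊ ρ = (|y|²/4) Q`, then `2(ρ,Q) = ((1+σ_c)/4) ‖yQ‖²` with `σ_c = N/2 - 2/(p-1)`. -/
theorem rho_Q_pairing (N : ℕ) (hN : 1 ≤ N) (p : ℝ) (hp : 1 < p)
    (Q ρ : SchwartzMap (EuclideanSpace ℝ (Fin N)) ℝ)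
    (hQpos : ∀ y, 0 < Q y)
    (hQeq : ∀ y, lapR (⇑Q) y - Q y + Q y ^ p = 0)
    (hρeq : ∀ y, -lapR (⇑ρ) y + ρ y - p * Q y ^ (p - 1) * ρ y = (‖y‖ ^ 2 / 4) * Q y) :
    2 * (∫ y : EuclideanSpace ℝ (Fin N), ρ y * Q y) =
      ((1 + ((N : ℝ) / 2 - 2 / (p - 1))) / 4) *
        ∫ y : EuclideanSpace ℝ (Fin N), ‖y‖ ^ 2 * Q y ^ 2 :=
  rho_Q_pairing_general N p hp Q ρ hQpos hQeq hρeq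
end

section
/- For 1 < p ≤ 2 there exists C > 0 such that for all z, w ∈ C: |∇F(z+w) - ∇F(z)| ≤ C|w|^{p-1}, where F(z) = |z|^{p-1}z and ∇F is the real gradient of F : R² → R². -/
open Complex
noncomputable def Dmap (a : ℝ) (v : ℂ) : ℂ →L[ℝ] ℂ :=
  (‖v‖ ^ a) • ContinuousLinearMap.id ℝ ℂ +
  (a * ‖v‖ ^ (a - 2)) •
    ((Complex.reCLM.comp (ContinuousLinearMap.mul ℝ ℂ ((starRingEnd ℂ) v))).smulRight v)

lemma hasFDerivAt_normSq' (v : ℂ) :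
    HasFDerivAt Complex.normSq
      ((2 : ℝ) • (Complex.reCLM.comp (ContinuousLinearMap.mul ℝ ℂ ((starRingEnd ℂ) v)))) v := by
  have h : HasFDerivAt (fun z : ℂ => z.re * z.re + z.im * z.im)
      ((v.re • Complex.reCLM + v.re • Complex.reCLM) +
        (v.im • Complex.imCLM + v.im • Complex.imCLM)) v :=
    (Complex.reCLM.hasFDerivAt.mul Complex.reCLM.hasFDerivAt).add
      (Complex.imCLM.hasFDerivAt.mul Complex.imCLM.hasFDerivAt)
  convert h using 1
  · ext z
    simp [Complex.normSq_apply]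
  ext z
  simp [Complex.mul_re]
  ring

lemma hasFDerivAt_F {a : ℝ} (ha : 0 < a) (ha1 : a ≤ 1) (v : ℂ) :
    HasFDerivAt (fun z : ℂ => Complex.ofReal (‖z‖ ^ a) * z) (Dmap a v) v := by
  rcases eq_or_ne v 0 with rfl | hv
  · -- derivative at 0 is 0 = Dmap a 0
    have hD : Dmap a 0 = 0 := by
      ext w
      simp [Dmap, Real.zero_rpow ha.ne', Real.zero_rpow (by linarith : a - 2 ≠ 0)]
    rw [hD, hasFDerivAt_iff_isLittleO_nhds_zero]
    rw [Asymptotics.isLittleO_iff]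
    intro c hc
    have ht : Filter.Tendsto (fun h : ℂ => ‖h‖ ^ a) (nhds 0) (nhds 0) := by
      have h1 : Filter.Tendsto (fun x : ℝ => x ^ a) (nhds 0) (nhds ((0:ℝ) ^ a)) :=
        (Real.continuousAt_rpow_const 0 a (Or.inr ha.le)).tendsto
      rw [Real.zero_rpow ha.ne'] at h1
      exact h1.comp (by simpa using continuous_norm.tendsto (0:ℂ))
    filter_upwards [ht.eventually (eventually_le_nhds hc)] with h hh
    have : ‖Complex.ofReal (‖h‖ ^ a) * h‖ = ‖h‖ ^ a * ‖h‖ := by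
      rw [norm_mul, Complex.norm_real, Real.norm_eq_abs,
        _root_.abs_of_nonneg (Real.rpow_nonneg (norm_nonneg h) a)]
    simpa [this, abs_of_nonneg (Real.rpow_nonneg (norm_nonneg h) a)] using mul_le_mul_of_nonneg_right hh (norm_nonneg h)
  · have hns : Complex.normSq v ≠ 0 := by simpa [Complex.normSq_eq_zero] using hv
    have hnv : (0:ℝ) < ‖v‖ := norm_pos_iff.mpr hv
    have h1 := hasFDerivAt_normSq' v
    have h2 := (Real.hasDerivAt_rpow_const (x := Complex.normSq v) (p := a/2)
      (Or.inl hns)).comp_hasFDerivAt v h1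
    have h3 := (Complex.ofRealCLM.hasFDerivAt (x := Complex.normSq v ^ (a/2))).comp v h2
    have h4 := h3.mul' (hasFDerivAt_id v)
    have habs : ∀ z : ℂ, ‖z‖ ^ a = Complex.normSq z ^ (a/2) := by
      intro z
      rw [Complex.norm_def, Real.sqrt_eq_rpow, ← Real.rpow_mul (Complex.normSq_nonneg z)]
      congr 1; ring
    have hA : Complex.normSq v ^ (a/2) = ‖v‖ ^ a := by
      rw [Complex.normSq_eq_norm_sq, ← Real.rpow_natCast ‖v‖ 2,
        ← Real.rpow_mul (norm_nonneg v)]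
      congr 1; push_cast; ring
    have hB : Complex.normSq v ^ (a/2 - 1) = ‖v‖ ^ (a - 2) := by
      rw [Complex.normSq_eq_norm_sq, ← Real.rpow_natCast ‖v‖ 2,
        ← Real.rpow_mul (norm_nonneg v)]
      congr 1; push_cast; ring
    simp only [habs]
    convert h4 using 1
    · rfl
    · rfl
    · rfl
    ext w
    simp [Dmap, hA, hB, Complex.real_smul, Complex.ofReal_mul]
    ring

lemma rpow_sub_le_rpow_sub {a x y : ℝ} (ha : 0 ≤ a) (ha1 : a ≤ 1) (hy : 0 ≤ y) (hxy : y ≤ x) :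
    x ^ a - y ^ a ≤ (x - y) ^ a := by
  have hx : (0:ℝ) ≤ x - y := by linarith
  have h := NNReal.rpow_add_le_add_rpow (⟨x - y, hx⟩ : NNReal) (⟨y, hy⟩ : NNReal) ha ha1
  have he : ((⟨x - y, hx⟩ : NNReal) + (⟨y, hy⟩ : NNReal)) = (⟨x, by linarith⟩ : NNReal) := by
    ext; simp
  have h2 := NNReal.coe_le_coe.mpr h
  change ((x - y) + y) ^ a ≤ (x - y) ^ a + y ^ a at h2
  rw [sub_add_cancel] at h2
  linarith

lemma s_bound (a : ℝ) (ha : 0 < a) (ha1 : a ≤ 1) (w u : ℂ) :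
    ‖(‖u‖ ^ (a-2)) • ((((starRingEnd ℂ) u) * w).re • u)‖ ≤ ‖u‖ ^ a * ‖w‖ := by
  rcases eq_or_ne u 0 with rfl | hu
  · simp only [norm_zero, Real.zero_rpow (by linarith : a - 2 ≠ 0), zero_smul, smul_zero,
      norm_zero]
    positivity
  · have hu0 : (0:ℝ) < ‖u‖ := norm_pos_iff.mpr hu
    have h1 : |(((starRingEnd ℂ) u) * w).re| ≤ ‖u‖ * ‖w‖ := by
      calc |(((starRingEnd ℂ) u) * w).re| ≤ ‖((starRingEnd ℂ) u) * w‖ :=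
            Complex.abs_re_le_norm _
        _ = ‖u‖ * ‖w‖ := by
            rw [norm_mul, Complex.norm_conj]
    have h2 : ‖(‖u‖ ^ (a-2)) • ((((starRingEnd ℂ) u) * w).re • u)‖
        = ‖u‖ ^ (a-2) * (|(((starRingEnd ℂ) u) * w).re| * ‖u‖) := by
      rw [norm_smul, norm_smul, Real.norm_eq_abs, Real.norm_eq_abs,
        _root_.abs_of_nonneg (Real.rpow_nonneg (norm_nonneg u) _)]
    rw [h2]
    have h3 : ‖u‖ ^ (a-2) * (|(((starRingEnd ℂ) u) * w).re| * ‖u‖)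
        ≤ ‖u‖ ^ (a-2) * ((‖u‖ * ‖w‖) * ‖u‖) := by
      apply mul_le_mul_of_nonneg_left _ (Real.rpow_nonneg (norm_nonneg u) _)
      exact mul_le_mul_of_nonneg_right h1 (norm_nonneg u)
    refine h3.trans (le_of_eq ?_)
    have : ‖u‖ ^ (a-2) * (‖u‖ * ‖w‖ * ‖u‖) = (‖u‖ ^ (a-2) * ‖u‖ ^ (2:ℝ)) * ‖w‖ := by
      rw [show (2:ℝ) = ((2:ℕ):ℝ) by norm_num, Real.rpow_natCast]
      ring
    rw [this, ← Real.rpow_add hu0]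
    norm_num

lemma sdiff_bound (a : ℝ) (ha : 0 < a) (ha1 : a ≤ 1) (w v v' : ℂ) (hle : ‖v'‖ ≤ ‖v‖) :
    ‖(‖v‖ ^ (a-2)) • ((((starRingEnd ℂ) v) * w).re • v)
      - (‖v'‖ ^ (a-2)) • ((((starRingEnd ℂ) v') * w).re • v')‖
      ≤ 5 * ‖v - v'‖ ^ a * ‖w‖ := by
  rcases eq_or_ne v v' with rfl | hne
  · simp only [sub_self, norm_zero]
    positivity
  have hd : (0:ℝ) < ‖v - v'‖ := norm_pos_iff.mpr (sub_ne_zero.mpr hne)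
  set d := ‖v - v'‖ with hdd
  have hda : (0:ℝ) < d ^ a := Real.rpow_pos_of_pos hd a
  have hwn : (0:ℝ) ≤ ‖w‖ := norm_nonneg w
  rcases le_or_gt ‖v'‖ d with hA | hB
  · -- Case A : ‖v'‖ ≤ d, so ‖v‖ ≤ 2d
    have hv2d : ‖v‖ ≤ 2 * d := by
      have : ‖v‖ ≤ ‖v'‖ + ‖v - v'‖ := by
        calc ‖v‖ = ‖v' + (v - v')‖ := by ring_nf
          _ ≤ ‖v'‖ + ‖v - v'‖ := norm_add_le _ _
      linarith
    have hva : ‖v‖ ^ a ≤ 2 * d ^ a := by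
      calc ‖v‖ ^ a ≤ (2 * d) ^ a := Real.rpow_le_rpow (norm_nonneg v) hv2d ha.le
        _ = 2 ^ a * d ^ a := Real.mul_rpow (by norm_num) hd.le
        _ ≤ 2 * d ^ a := by
            have : (2:ℝ) ^ a ≤ 2 ^ (1:ℝ) :=
              Real.rpow_le_rpow_of_exponent_le one_le_two ha1
            rw [Real.rpow_one] at this
            nlinarith
    have hv'a : ‖v'‖ ^ a ≤ d ^ a := Real.rpow_le_rpow (norm_nonneg v') hA ha.le
    calc ‖(‖v‖ ^ (a-2)) • ((((starRingEnd ℂ) v) * w).re • v)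
          - (‖v'‖ ^ (a-2)) • ((((starRingEnd ℂ) v') * w).re • v')‖
        ≤ ‖(‖v‖ ^ (a-2)) • ((((starRingEnd ℂ) v) * w).re • v)‖
          + ‖(‖v'‖ ^ (a-2)) • ((((starRingEnd ℂ) v') * w).re • v')‖ := norm_sub_le _ _
      _ ≤ ‖v‖ ^ a * ‖w‖ + ‖v'‖ ^ a * ‖w‖ :=
          add_le_add (s_bound a ha ha1 w v) (s_bound a ha ha1 w v')
      _ ≤ (2 * d ^ a) * ‖w‖ + d ^ a * ‖w‖ :=
          add_le_add (mul_le_mul_of_nonneg_right hva hwn)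
            (mul_le_mul_of_nonneg_right hv'a hwn)
      _ ≤ 5 * d ^ a * ‖w‖ := by nlinarith
  · -- Case B : d < ‖v'‖ ≤ ‖v‖
    have hv' : (0:ℝ) < ‖v'‖ := lt_trans hd hB
    have hv : (0:ℝ) < ‖v‖ := lt_of_lt_of_le hv' hle
    set e : ℂ := ‖v‖⁻¹ • v with hedef
    set e' : ℂ := ‖v'‖⁻¹ • v' with he'def
    have hne1 : ‖e‖ = 1 := by
      rw [hedef, norm_smul, Real.norm_eq_abs, abs_of_pos (inv_pos.mpr hv), inv_mul_cancel₀ hv.ne']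
    have hne1' : ‖e'‖ = 1 := by
      rw [he'def, norm_smul, Real.norm_eq_abs, abs_of_pos (inv_pos.mpr hv'),
        inv_mul_cancel₀ hv'.ne']
    -- rewrite both terms in unit-vector form
    have hrw : ∀ u : ℂ, 0 < ‖u‖ →
        (‖u‖ ^ (a-2)) • ((((starRingEnd ℂ) u) * w).re • u)
          = (‖u‖ ^ a) • ((((starRingEnd ℂ) (‖u‖⁻¹ • u)) * w).re • (‖u‖⁻¹ • u)) := by
      intro u hu
      have hc : (starRingEnd ℂ) ((‖u‖:ℝ)⁻¹ • u) = (‖u‖:ℝ)⁻¹ • ((starRingEnd ℂ) u) := by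
        simp [Complex.real_smul, map_mul, Complex.conj_ofReal]
      rw [hc]
      have : ((((‖u‖:ℝ)⁻¹ • ((starRingEnd ℂ) u)) * w)).re
          = ‖u‖⁻¹ * (((starRingEnd ℂ) u) * w).re := by
        rw [Complex.real_smul, mul_assoc, Complex.re_ofReal_mul]
      rw [this, smul_smul, smul_smul, smul_smul]
      congr 1
      have h2 : ‖u‖ ^ (a-2) = ‖u‖ ^ a / ‖u‖ ^ (2:ℝ) := by
        rw [← Real.rpow_sub hu]
      have h3 : ‖u‖ ^ (2:ℝ) = ‖u‖ * ‖u‖ := by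
        rw [show (2:ℝ) = ((2:ℕ):ℝ) by norm_num, Real.rpow_natCast]; ring
      rw [h2, h3]
      field_simp
    rw [hrw v hv, hrw v' hv']
    set A : ℂ := (((starRingEnd ℂ) e) * w).re • e with hAdef
    set A' : ℂ := (((starRingEnd ℂ) e') * w).re • e' with hA'def
    have hsplit : (‖v‖ ^ a) • A - (‖v'‖ ^ a) • A'
        = (‖v‖ ^ a - ‖v'‖ ^ a) • A + (‖v'‖ ^ a) • (A - A') := by module
    -- bound ‖A‖
    have habsre : ∀ u z : ℂ, |(((starRingEnd ℂ) u) * z).re| ≤ ‖u‖ * ‖z‖ := by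
      intro u z
      calc |(((starRingEnd ℂ) u) * z).re| ≤ ‖((starRingEnd ℂ) u) * z‖ :=
            Complex.abs_re_le_norm _
        _ = ‖u‖ * ‖z‖ := by rw [norm_mul, Complex.norm_conj]
    have hAn : ‖A‖ ≤ ‖w‖ := by
      rw [hAdef, norm_smul, Real.norm_eq_abs, hne1, mul_one]
      simpa [hne1] using habsre e w
    -- bound ‖A - A'‖
    have hAA'split : A - A' = (((starRingEnd ℂ) (e - e')) * w).re • e
        + (((starRingEnd ℂ) e') * w).re • (e - e') := by
      rw [hAdef, hA'def, map_sub, sub_mul, Complex.sub_re, sub_smul, smul_sub]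
      module
    have hAA' : ‖A - A'‖ ≤ 2 * ‖e - e'‖ * ‖w‖ := by
      rw [hAA'split]
      calc ‖(((starRingEnd ℂ) (e - e')) * w).re • e
            + (((starRingEnd ℂ) e') * w).re • (e - e')‖
          ≤ ‖(((starRingEnd ℂ) (e - e')) * w).re • e‖
            + ‖(((starRingEnd ℂ) e') * w).re • (e - e')‖ := norm_add_le _ _
        _ ≤ (‖e - e'‖ * ‖w‖) * 1 + (‖e'‖ * ‖w‖) * ‖e - e'‖ := by
            apply add_le_add
            · rw [norm_smul, Real.norm_eq_abs, hne1, mul_one, mul_one]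
              exact habsre (e - e') w
            · rw [norm_smul, Real.norm_eq_abs]
              exact mul_le_mul_of_nonneg_right (habsre e' w) (norm_nonneg _)
        _ = 2 * ‖e - e'‖ * ‖w‖ := by rw [hne1']; ring
    -- bound ‖e - e'‖
    have hee' : ‖e - e'‖ ≤ 2 * d / ‖v‖ := by
      have hsplit2 : e - e' = ‖v‖⁻¹ • (v - v') + (‖v‖⁻¹ - ‖v'‖⁻¹) • v' := by
        rw [hedef, he'def]; module
      rw [hsplit2]
      have h1 : ‖(‖v‖⁻¹ : ℝ) • (v - v')‖ = d / ‖v‖ := by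
        rw [norm_smul, Real.norm_eq_abs, abs_of_pos (inv_pos.mpr hv), ← hdd]
        ring
      have h2 : ‖((‖v‖⁻¹ - ‖v'‖⁻¹ : ℝ)) • v'‖ ≤ d / ‖v‖ := by
        rw [norm_smul, Real.norm_eq_abs]
        have hinv : |‖v‖⁻¹ - ‖v'‖⁻¹| = ‖v'‖⁻¹ - ‖v‖⁻¹ := by
          rw [abs_sub_comm, _root_.abs_of_nonneg]
          have := one_div_le_one_div_of_le hv' hle
          simp only [one_div] at this
          linarith
        rw [hinv]
        have hnn : ‖v‖ - ‖v'‖ ≤ d := by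
          simpa [hdd] using norm_sub_norm_le v v'
        rw [div_eq_mul_inv]
        have key : (‖v'‖⁻¹ - ‖v‖⁻¹) * ‖v'‖ = (‖v‖ - ‖v'‖) / ‖v‖ := by
          rw [div_eq_mul_inv, sub_mul, sub_mul, inv_mul_cancel₀ hv'.ne',
            mul_inv_cancel₀ hv.ne']
          ring
        rw [key, ← div_eq_mul_inv]
        gcongr
      calc ‖(‖v‖⁻¹:ℝ) • (v - v') + ((‖v‖⁻¹ - ‖v'‖⁻¹:ℝ)) • v'‖
          ≤ ‖(‖v‖⁻¹:ℝ) • (v - v')‖ + ‖((‖v‖⁻¹ - ‖v'‖⁻¹:ℝ)) • v'‖ := norm_add_le _ _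
        _ ≤ d / ‖v‖ + d / ‖v‖ := by rw [h1]; exact add_le_add le_rfl h2
        _ = 2 * d / ‖v‖ := by ring
    -- first scalar difference
    have hfirst : ‖v‖ ^ a - ‖v'‖ ^ a ≤ d ^ a := by
      have h1 : ‖v‖ ^ a - ‖v'‖ ^ a ≤ (‖v‖ - ‖v'‖) ^ a :=
        rpow_sub_le_rpow_sub ha.le ha1 (norm_nonneg v') hle
      have h2 : (‖v‖ - ‖v'‖) ^ a ≤ d ^ a := by
        apply Real.rpow_le_rpow (by linarith [norm_sub_norm_le v v' ]) _ ha.le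
        simpa [hdd] using norm_sub_norm_le v v'
      linarith
    have hfirst0 : 0 ≤ ‖v‖ ^ a - ‖v'‖ ^ a := by
      have := Real.rpow_le_rpow (norm_nonneg v') hle ha.le
      linarith
    -- second coefficient
    have hsecond : ‖v'‖ ^ a * (2 * ‖e - e'‖ * ‖w‖) ≤ 4 * d ^ a * ‖w‖ := by
      have hb1 : ‖v'‖ ^ a ≤ ‖v‖ ^ a := Real.rpow_le_rpow (norm_nonneg v') hle ha.le
      have hb2 : ‖v‖ ^ a * (2 * (2 * d / ‖v‖)) = 4 * d * (‖v‖ ^ a / ‖v‖) := by ring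
      have hb3 : ‖v‖ ^ a / ‖v‖ = ‖v‖ ^ (a - 1) := by
        rw [Real.rpow_sub hv, Real.rpow_one]
      have hb4 : ‖v‖ ^ (a-1) ≤ d ^ (a-1) :=
        Real.rpow_le_rpow_of_nonpos hd (le_trans hB.le hle) (by linarith)
      have hb5 : d * d ^ (a-1) = d ^ a := by
        rw [mul_comm, ← Real.rpow_add_one hd.ne']
        ring_nf
      calc ‖v'‖ ^ a * (2 * ‖e - e'‖ * ‖w‖)
          ≤ ‖v‖ ^ a * (2 * (2 * d / ‖v‖)) * ‖w‖ := by
            have h1 : 2 * ‖e - e'‖ ≤ 2 * (2 * d / ‖v‖) := by linarith [hee']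
            have h2 : ‖v'‖ ^ a * (2 * ‖e - e'‖) ≤ ‖v‖ ^ a * (2 * (2 * d / ‖v‖)) := by
              apply mul_le_mul hb1 h1 (by positivity) (by positivity)
            calc ‖v'‖ ^ a * (2 * ‖e - e'‖ * ‖w‖) = (‖v'‖ ^ a * (2 * ‖e - e'‖)) * ‖w‖ := by ring
              _ ≤ ‖v‖ ^ a * (2 * (2 * d / ‖v‖)) * ‖w‖ :=
                  mul_le_mul_of_nonneg_right h2 hwn
        _ = 4 * d * (‖v‖ ^ a / ‖v‖) * ‖w‖ := by rw [← hb2]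
        _ = 4 * d * ‖v‖ ^ (a-1) * ‖w‖ := by rw [hb3]
        _ ≤ 4 * d * d ^ (a-1) * ‖w‖ := by
            apply mul_le_mul_of_nonneg_right _ hwn
            apply mul_le_mul_of_nonneg_left hb4 (by positivity)
        _ = 4 * d ^ a * ‖w‖ := by rw [mul_assoc 4 d (d ^ (a-1)), hb5]
    -- assemble
    rw [hsplit]
    calc ‖(‖v‖ ^ a - ‖v'‖ ^ a) • A + (‖v'‖ ^ a) • (A - A')‖
        ≤ ‖(‖v‖ ^ a - ‖v'‖ ^ a) • A‖ + ‖(‖v'‖ ^ a) • (A - A')‖ := norm_add_le _ _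
      _ ≤ (‖v‖ ^ a - ‖v'‖ ^ a) * ‖w‖ + ‖v'‖ ^ a * (2 * ‖e - e'‖ * ‖w‖) := by
          apply add_le_add
          · rw [norm_smul, Real.norm_eq_abs, _root_.abs_of_nonneg hfirst0]
            exact mul_le_mul_of_nonneg_left hAn hfirst0
          · rw [norm_smul, Real.norm_eq_abs,
              _root_.abs_of_nonneg (Real.rpow_nonneg (norm_nonneg v') a)]
            exact mul_le_mul_of_nonneg_left hAA' (Real.rpow_nonneg (norm_nonneg v') a)
      _ ≤ d ^ a * ‖w‖ + 4 * d ^ a * ‖w‖ :=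
          add_le_add (mul_le_mul_of_nonneg_right hfirst hwn) hsecond
      _ = 5 * d ^ a * ‖w‖ := by ring

lemma Dmap_apply (a : ℝ) (v w : ℂ) :
    Dmap a v w = (‖v‖ ^ a) • w + (a * ‖v‖ ^ (a - 2)) • ((((starRingEnd ℂ) v) * w).re • v) := by
  simp [Dmap]

lemma Dmap_holder (a : ℝ) (ha : 0 < a) (ha1 : a ≤ 1) (v v' : ℂ) (hle : ‖v'‖ ≤ ‖v‖) :
    ‖Dmap a v - Dmap a v'‖ ≤ 6 * ‖v - v'‖ ^ a := by
  have hda : (0:ℝ) ≤ ‖v - v'‖ ^ a := Real.rpow_nonneg (norm_nonneg _) a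
  apply ContinuousLinearMap.opNorm_le_bound _ (by positivity)
  intro w
  have happ : (Dmap a v - Dmap a v') w
      = ((‖v‖ ^ a - ‖v'‖ ^ a) • w)
        + a • ((‖v‖ ^ (a-2)) • ((((starRingEnd ℂ) v) * w).re • v)
            - (‖v'‖ ^ (a-2)) • ((((starRingEnd ℂ) v') * w).re • v')) := by
    simp only [ContinuousLinearMap.sub_apply, Dmap_apply]
    module
  rw [happ]
  have h1 : ‖(‖v‖ ^ a - ‖v'‖ ^ a) • w‖ ≤ ‖v - v'‖ ^ a * ‖w‖ := by
    rw [norm_smul, Real.norm_eq_abs]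
    apply mul_le_mul_of_nonneg_right _ (norm_nonneg w)
    have h0 : 0 ≤ ‖v‖ ^ a - ‖v'‖ ^ a := by
      have := Real.rpow_le_rpow (norm_nonneg v') hle ha.le
      linarith
    rw [_root_.abs_of_nonneg h0]
    have hx := rpow_sub_le_rpow_sub ha.le ha1 (norm_nonneg v') hle
    have hy : (‖v‖ - ‖v'‖) ^ a ≤ ‖v - v'‖ ^ a := by
      apply Real.rpow_le_rpow (by linarith [norm_sub_norm_le v v']) _ ha.le
      exact norm_sub_norm_le v v'
    linarith
  have h2 : ‖a • ((‖v‖ ^ (a-2)) • ((((starRingEnd ℂ) v) * w).re • v)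
      - (‖v'‖ ^ (a-2)) • ((((starRingEnd ℂ) v') * w).re • v'))‖
      ≤ 5 * ‖v - v'‖ ^ a * ‖w‖ := by
    rw [norm_smul, Real.norm_eq_abs, _root_.abs_of_pos ha]
    calc a * ‖(‖v‖ ^ (a-2)) • ((((starRingEnd ℂ) v) * w).re • v)
          - (‖v'‖ ^ (a-2)) • ((((starRingEnd ℂ) v') * w).re • v')‖
        ≤ 1 * (5 * ‖v - v'‖ ^ a * ‖w‖) := by
          apply mul_le_mul ha1 (sdiff_bound a ha ha1 w v v' hle) (norm_nonneg _) zero_le_one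
      _ = 5 * ‖v - v'‖ ^ a * ‖w‖ := one_mul _
  calc ‖((‖v‖ ^ a - ‖v'‖ ^ a) • w)
        + a • ((‖v‖ ^ (a-2)) • ((((starRingEnd ℂ) v) * w).re • v)
            - (‖v'‖ ^ (a-2)) • ((((starRingEnd ℂ) v') * w).re • v'))‖
      ≤ ‖(‖v‖ ^ a - ‖v'‖ ^ a) • w‖
        + ‖a • ((‖v‖ ^ (a-2)) • ((((starRingEnd ℂ) v) * w).re • v)
            - (‖v'‖ ^ (a-2)) • ((((starRingEnd ℂ) v') * w).re • v'))‖ := norm_add_le _ _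
    _ ≤ ‖v - v'‖ ^ a * ‖w‖ + 5 * ‖v - v'‖ ^ a * ‖w‖ := add_le_add h1 h2
    _ = 6 * ‖v - v'‖ ^ a * ‖w‖ := by ring

/-- Hölder continuity of the real derivative of `F(z) = |z|^{p-1} z` for `1 < p ≤ 2`:
`‖∇F(z+w) - ∇F(z)‖ ≤ C |w|^{p-1}`, where `∇F` is the real Fréchet derivative of
`F : ℂ ≅ ℝ² → ℂ ≅ ℝ²`. -/
theorem nonlinearity_derivative_holder (p : ℝ) (hp1 : 1 < p) (hp2 : p ≤ 2) :
    ∃ C > 0, ∀ z w : ℂ,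
      ‖fderiv ℝ (fun v : ℂ => Complex.ofReal (‖v‖ ^ (p - 1)) * v) (z + w)
          - fderiv ℝ (fun v : ℂ => Complex.ofReal (‖v‖ ^ (p - 1)) * v) z‖ ≤
        C * ‖w‖ ^ (p - 1) := by
  set a := p - 1 with hadef
  have ha : 0 < a := by simp [hadef]; linarith
  have ha1 : a ≤ 1 := by simp [hadef]; linarith
  refine ⟨6, by norm_num, fun z w => ?_⟩
  have hf : ∀ v : ℂ, fderiv ℝ (fun v : ℂ => Complex.ofReal (‖v‖ ^ a) * v) v
      = Dmap a v := fun v => (hasFDerivAt_F ha ha1 v).fderiv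
  rw [hf, hf]
  have hw : ‖w‖ ^ a = ‖(z + w) - z‖ ^ a := by
    rw [show (z + w) - z = w by ring]
  rw [hw]
  rcases le_total ‖z‖ ‖z + w‖ with h | h
  · exact Dmap_holder a ha ha1 (z + w) z h
  · rw [norm_sub_rev, show (z + w) - z = -(z - (z + w)) by ring, norm_neg]
    exact Dmap_holder a ha ha1 z (z + w) h
end
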